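/- Let ι be a finite index set, let (z_i)_{i∈ι} be i.i.d. standard (mean zero, variance one) Gaussian random variables, let (C_i)_{i∈ι} be nonnegative reals, let f ∈ ℝ, set W = Σ_{i∈ι} √(C_i) · z_i, Q = W² − Σ_{i∈ι} C_i, and for each ℓ ∈ ι define η_ℓ = √(4π C_ℓ) · z_ℓ + 3f · Q. Then for all ℓ, ℓ′ ∈ ι, E[η_ℓ η_{ℓ′}] = 4π C_ℓ · δ_{ℓℓ′} + 18 f² (Σ_{i∈ι} C_i)², where δ_{ℓℓ′} is the Kronecker delta. In particular E[η_ℓ²] = 4π C_ℓ + O(f²), so the angular power spectrum of the associated sparse field equals C_ℓ up to a term of order f². -/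

import Mathlib

open MeasureTheory ProbabilityTheory Real Filter

namespace SparseAux


lemma pow_le_factorial_mul_exp (t : ℝ) (ht : 0 ≤ t) (n : ℕ) :
    t ^ n ≤ (n.factorial : ℝ) * Real.exp t := by
  have h := Real.pow_div_factorial_le_exp t ht n
  have hf : (0:ℝ) < n.factorial := by positivity
  rw [div_le_iff₀ hf] at h
  linarith [h]

lemma integrable_pow_mul_gauss {b : ℝ} (hb : 0 < b) (n : ℕ) :
    Integrable (fun x : ℝ => x ^ n * Real.exp (-b * x ^ 2)) := by
  have hmaj : Integrable (fun x : ℝ =>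
      (n.factorial : ℝ) * Real.exp (1 / (2 * b)) * Real.exp (-(b / 2) * x ^ 2)) :=
    (integrable_exp_neg_mul_sq (by positivity)).const_mul _
  refine hmaj.mono' ?_ ?_
  · exact ((measurable_id.pow_const n).mul
      (((measurable_id.pow_const 2).const_mul (-b)).exp)).aestronglyMeasurable
  · refine Filter.Eventually.of_forall fun x => ?_
    have h1 : |x| ^ n ≤ (n.factorial : ℝ) * Real.exp |x| :=
      pow_le_factorial_mul_exp |x| (abs_nonneg x) n
    have h2 : Real.exp |x| * Real.exp (-b * x ^ 2)
        ≤ Real.exp (1 / (2 * b)) * Real.exp (-(b / 2) * x ^ 2) := by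
      rw [← Real.exp_add, ← Real.exp_add, Real.exp_le_exp]
      have hx2 : x ^ 2 = |x| ^ 2 := (sq_abs x).symm
      have hb' : (0:ℝ) < 2 * b := by linarith
      rw [hx2]
      have hu : 1 / (2 * b) * (2 * b) = 1 := by field_simp
      nlinarith [sq_nonneg (b * |x| - 1), abs_nonneg x, hb, one_div_pos.mpr hb']
    have hnorm : ‖x ^ n * Real.exp (-b * x ^ 2)‖ = |x| ^ n * Real.exp (-b * x ^ 2) := by
      rw [norm_mul, Real.norm_eq_abs, Real.norm_eq_abs, abs_pow,
        abs_of_pos (Real.exp_pos _)]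
    rw [hnorm]
    calc |x| ^ n * Real.exp (-b * x ^ 2)
        ≤ (n.factorial : ℝ) * Real.exp |x| * Real.exp (-b * x ^ 2) :=
          mul_le_mul_of_nonneg_right h1 (Real.exp_pos _).le
      _ = (n.factorial : ℝ) * (Real.exp |x| * Real.exp (-b * x ^ 2)) := by ring
      _ ≤ (n.factorial : ℝ) * (Real.exp (1 / (2 * b)) * Real.exp (-(b / 2) * x ^ 2)) :=
          mul_le_mul_of_nonneg_left h2 (by positivity)
      _ = (n.factorial : ℝ) * Real.exp (1 / (2 * b)) * Real.exp (-(b / 2) * x ^ 2) := by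
          ring

lemma tendsto_pow_mul_gauss_atTop {b : ℝ} (hb : 0 < b) (n : ℕ) :
    Tendsto (fun x : ℝ => x ^ n * Real.exp (-b * x ^ 2)) atTop (nhds 0) := by
  have h := rpow_mul_exp_neg_mul_sq_isLittleO_exp_neg hb (n : ℝ)
  have h2 : (fun x : ℝ => x ^ n * Real.exp (-b * x ^ 2)) =o[atTop]
      fun x => Real.exp (-(1/2) * x) := by
    refine h.congr' ?_ (EventuallyEq.refl _ _)
    filter_upwards with x
    rw [Real.rpow_natCast]
  refine h2.tendsto_zero_of_tendsto (y := (0:ℝ)) ?_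
  have : Tendsto (fun x : ℝ => -(1/2) * x) atTop atBot :=
    Tendsto.const_mul_atTop_of_neg (by norm_num) tendsto_id
  exact Real.tendsto_exp_atBot.comp this

lemma tendsto_pow_mul_gauss_atBot {b : ℝ} (hb : 0 < b) (n : ℕ) :
    Tendsto (fun x : ℝ => x ^ n * Real.exp (-b * x ^ 2)) atBot (nhds 0) := by
  have h := ((tendsto_pow_mul_gauss_atTop hb n).const_mul ((-1 : ℝ) ^ n)).comp
    tendsto_neg_atBot_atTop
  simp only [mul_zero] at h
  refine h.congr fun x => ?_
  simp only [Function.comp_apply, neg_sq]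
  rw [← mul_assoc, ← mul_pow]
  norm_num

lemma integral_deriv_eq_zero (f f' : ℝ → ℝ) (hd : ∀ x, HasDerivAt f (f' x) x)
    (hi : Integrable f') (ht : Tendsto f atTop (nhds 0))
    (hbot : Tendsto f atBot (nhds 0)) : ∫ x, f' x = 0 := by
  have h1 : ∫ x in Set.Iic (0:ℝ), f' x = f 0 - 0 :=
    integral_Iic_of_hasDerivAt_of_tendsto' (fun x _ => hd x) hi.integrableOn hbot
  have h2 : ∫ x in Set.Ioi (0:ℝ), f' x = 0 - f 0 :=
    integral_Ioi_of_hasDerivAt_of_tendsto' (fun x _ => hd x) hi.integrableOn ht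
  have h3 := MeasureTheory.integral_add_compl (measurableSet_Iic (a := (0:ℝ))) hi
  rw [Set.compl_Iic] at h3
  rw [← h3, h1, h2]; ring





noncomputable def J (n : ℕ) : ℝ := ∫ x : ℝ, x ^ n * Real.exp (-(2⁻¹ : ℝ) * x ^ 2)

lemma half_pos' : (0:ℝ) < 2⁻¹ := by norm_num

lemma J_zero : J 0 = Real.sqrt (2 * π) := by
  have h := integral_gaussian (2⁻¹ : ℝ)
  simp only [J, pow_zero, one_mul]
  rw [h, show π / 2⁻¹ = 2 * π from by ring]

lemma hasDerivAt_aux (k : ℕ) (x : ℝ) :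
    HasDerivAt (fun x : ℝ => x ^ (k+1) * Real.exp (-(2⁻¹:ℝ) * x ^ 2))
      (((k+1 : ℝ) * x ^ k - x ^ (k+2)) * Real.exp (-(2⁻¹:ℝ) * x ^ 2)) x := by
  have h1 : HasDerivAt (fun x : ℝ => x ^ (k+1)) ((k+1 : ℝ) * x ^ k) x := by
    simpa using hasDerivAt_pow (k+1) x
  have hp : HasDerivAt (fun x : ℝ => -(2⁻¹:ℝ) * x ^ 2) (-(2⁻¹:ℝ) * (2 * x)) x := by
    simpa using ((hasDerivAt_pow 2 x).const_mul (-(2⁻¹:ℝ)))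
  have h2 : HasDerivAt (fun x : ℝ => Real.exp (-(2⁻¹:ℝ) * x ^ 2))
      (Real.exp (-(2⁻¹:ℝ) * x ^ 2) * (-(2⁻¹:ℝ) * (2 * x))) x := hp.exp
  have := h1.mul h2
  refine this.congr_deriv ?_
  ring

lemma J_rec (k : ℕ) : J (k + 2) = (k + 1 : ℝ) * J k := by
  have hint : Integrable (fun x : ℝ =>
      ((k+1 : ℝ) * x ^ k - x ^ (k+2)) * Real.exp (-(2⁻¹:ℝ) * x ^ 2)) := by
    have h1 := (integrable_pow_mul_gauss half_pos' k).const_mul (k+1 : ℝ)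
    have h2 := integrable_pow_mul_gauss half_pos' (k+2)
    have := h1.sub h2
    refine this.congr ?_
    filter_upwards with x
    simp only [Pi.sub_apply]
    ring
  have h0 := integral_deriv_eq_zero _ _ (hasDerivAt_aux k) hint
    (by simpa using tendsto_pow_mul_gauss_atTop half_pos' (k+1))
    (by simpa using tendsto_pow_mul_gauss_atBot half_pos' (k+1))
  have hsplit : ∫ x : ℝ, ((k+1 : ℝ) * x ^ k - x ^ (k+2)) * Real.exp (-(2⁻¹:ℝ) * x ^ 2)
      = (k+1 : ℝ) * J k - J (k+2) := by
    rw [show (fun x : ℝ => ((k+1 : ℝ) * x ^ k - x ^ (k+2)) * Real.exp (-(2⁻¹:ℝ) * x ^ 2))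
        = fun x : ℝ => (k+1 : ℝ) * (x ^ k * Real.exp (-(2⁻¹:ℝ) * x ^ 2))
          - x ^ (k+2) * Real.exp (-(2⁻¹:ℝ) * x ^ 2) from funext fun x => by ring]
    rw [integral_sub (((integrable_pow_mul_gauss half_pos' k).const_mul _))
      (integrable_pow_mul_gauss half_pos' (k+2)), integral_const_mul]
    rfl
  rw [hsplit] at h0
  linarith

lemma J_one : J 1 = 0 := by
  have hd : ∀ x : ℝ, HasDerivAt (fun x : ℝ => -Real.exp (-(2⁻¹:ℝ) * x ^ 2))
      (x ^ 1 * Real.exp (-(2⁻¹:ℝ) * x ^ 2)) x := by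
    intro x
    have hp : HasDerivAt (fun x : ℝ => -(2⁻¹:ℝ) * x ^ 2) (-(2⁻¹:ℝ) * (2 * x)) x := by
      simpa using ((hasDerivAt_pow 2 x).const_mul (-(2⁻¹:ℝ)))
    have h2 : HasDerivAt (fun x : ℝ => Real.exp (-(2⁻¹:ℝ) * x ^ 2))
        (Real.exp (-(2⁻¹:ℝ) * x ^ 2) * (-(2⁻¹:ℝ) * (2 * x))) x := hp.exp
    have := h2.neg
    refine this.congr_deriv ?_
    ring
  have ht : Tendsto (fun x : ℝ => -Real.exp (-(2⁻¹:ℝ) * x ^ 2)) atTop (nhds 0) := by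
    have := (tendsto_pow_mul_gauss_atTop half_pos' 0).neg
    simp only [pow_zero, one_mul, neg_zero] at this
    exact this
  have hb : Tendsto (fun x : ℝ => -Real.exp (-(2⁻¹:ℝ) * x ^ 2)) atBot (nhds 0) := by
    have := (tendsto_pow_mul_gauss_atBot half_pos' 0).neg
    simp only [pow_zero, one_mul, neg_zero] at this
    exact this
  exact integral_deriv_eq_zero _ _ hd (integrable_pow_mul_gauss half_pos' 1) ht hb

lemma J_two : J 2 = Real.sqrt (2 * π) := by
  have := J_rec 0
  rw [J_zero] at this
  simpa using this

lemma J_three : J 3 = 0 := by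
  have := J_rec 1
  rw [J_one] at this
  simpa using this

lemma J_four : J 4 = 3 * Real.sqrt (2 * π) := by
  have h := J_rec 2
  rw [J_two] at h
  rw [show (4:ℕ) = 2 + 2 from rfl, h]
  norm_num

/-- transfer to `gaussianReal 0 1` -/
lemma gaussianReal_eq_withDensity :
    gaussianReal 0 1 = volume.withDensity
      (fun x => ((gaussianPDFReal 0 1 x).toNNReal : ENNReal)) := by
  rw [gaussianReal_of_var_ne_zero 0 one_ne_zero]
  rfl

lemma pdf_eq (x : ℝ) : gaussianPDFReal 0 1 x
    = (Real.sqrt (2 * π))⁻¹ * Real.exp (-(2⁻¹:ℝ) * x ^ 2) := by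
  simp only [gaussianPDFReal, NNReal.coe_one, mul_one, sub_zero]
  congr 1
  ring

lemma integral_gaussianReal (g : ℝ → ℝ) (hg : Measurable g) :
    ∫ x, g x ∂(gaussianReal 0 1)
      = ∫ x, gaussianPDFReal 0 1 x * g x := by
  rw [gaussianReal_eq_withDensity,
    integral_withDensity_eq_integral_smul
      ((measurable_gaussianPDFReal 0 1).real_toNNReal) g]
  congr 1
  funext x
  rw [NNReal.smul_def, smul_eq_mul, Real.coe_toNNReal _ (gaussianPDFReal_nonneg 0 1 x)]

lemma integrable_pow_gaussianReal (n : ℕ) :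
    Integrable (fun x : ℝ => x ^ n) (gaussianReal 0 1) := by
  rw [gaussianReal_eq_withDensity]
  rw [integrable_withDensity_iff_integrable_smul
    ((measurable_gaussianPDFReal 0 1).real_toNNReal)]
  have : Integrable (fun x : ℝ =>
      (Real.sqrt (2*π))⁻¹ * (x ^ n * Real.exp (-(2⁻¹:ℝ) * x ^ 2))) :=
    (integrable_pow_mul_gauss half_pos' n).const_mul _
  refine this.congr ?_
  filter_upwards with x
  rw [NNReal.smul_def, smul_eq_mul, Real.coe_toNNReal _ (gaussianPDFReal_nonneg 0 1 x),
    pdf_eq]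
  ring

noncomputable def M (n : ℕ) : ℝ := ∫ x, x ^ n ∂(gaussianReal 0 1)

lemma sqrt_two_pi_pos : (0:ℝ) < Real.sqrt (2 * π) := by
  apply Real.sqrt_pos.2; positivity

lemma M_eq (n : ℕ) : M n = (Real.sqrt (2 * π))⁻¹ * J n := by
  rw [M, integral_gaussianReal _ (by fun_prop)]
  simp only [pdf_eq]
  rw [J, ← integral_const_mul]
  congr 1
  funext x
  ring

lemma M_zero : M 0 = 1 := by
  rw [M_eq, J_zero, inv_mul_cancel₀ sqrt_two_pi_pos.ne']
lemma M_one : M 1 = 0 := by rw [M_eq, J_one, mul_zero]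
lemma M_two : M 2 = 1 := by
  rw [M_eq, J_two, inv_mul_cancel₀ sqrt_two_pi_pos.ne']
lemma M_three : M 3 = 0 := by rw [M_eq, J_three, mul_zero]
lemma M_four : M 4 = 3 := by
  rw [M_eq, J_four, ← mul_assoc]
  rw [inv_mul_eq_div, div_mul_eq_mul_div, mul_comm]
  field_simp


noncomputable def mval : ℕ → ℝ → ℝ
  | 0, _ => 1
  | 1, _ => 0
  | 2, S => S
  | 3, _ => 0
  | 4, S => 3 * S ^ 2
  | _+5, _ => 0

end SparseAux


open SparseAux

/-- Second moments of the sparse-model weights: with `z i` i.i.d. standard Gaussians,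
`C i ≥ 0`, `W = ∑ i √(C i) z i`, `Q = W² − ∑ i C i` and
`η_ℓ = √(4π C_ℓ) z_ℓ + 3 f Q`, for all `ℓ, ℓ'` one has
`E[η_ℓ η_{ℓ'}] = 4π C_ℓ δ_{ℓℓ'} + 18 f² (∑ i C i)²`;
in particular the angular power spectrum of the associated sparse field equals
`C_ℓ` up to a term of order `f²`. -/
theorem power_spectrum_sparse_model
    {Ω : Type*} [MeasurableSpace Ω] (μ : Measure Ω) [IsProbabilityMeasure μ]
    {ι : Type*} [Fintype ι] [DecidableEq ι]
    (z : ι → Ω → ℝ) (hzm : ∀ i, Measurable (z i))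
    (hindep : iIndepFun z μ)
    (hlaw : ∀ i, Measure.map (z i) μ = gaussianReal 0 1)
    (C : ι → ℝ) (hC : ∀ i, 0 ≤ C i) (f : ℝ)
    (W : Ω → ℝ) (hW : ∀ ω, W ω = ∑ i, Real.sqrt (C i) * z i ω)
    (Q : Ω → ℝ) (hQ : ∀ ω, Q ω = (W ω) ^ 2 - ∑ i, C i)
    (η : ι → Ω → ℝ)
    (hη : ∀ ℓ ω, η ℓ ω = Real.sqrt (4 * Real.pi * C ℓ) * z ℓ ω + 3 * f * Q ω)
    (ℓ ℓ' : ι) :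
    ∫ ω, η ℓ ω * η ℓ' ω ∂μ
      = 4 * Real.pi * C ℓ * (if ℓ = ℓ' then 1 else 0)
        + 18 * f ^ 2 * (∑ i, C i) ^ 2 := by
  -- moments of the individual variables
  have zmom_int : ∀ (i : ι) (n : ℕ), Integrable (fun ω => z i ω ^ n) μ := by
    intro i n
    have h := (integrable_map_measure
      (μ := μ) (f := z i) (g := fun x : ℝ => x ^ n)
      (by rw [hlaw i]; exact (integrable_pow_gaussianReal n).aestronglyMeasurable)
      (hzm i).aemeasurable).1
    have h2 : Integrable (fun x : ℝ => x ^ n) (Measure.map (z i) μ) := by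
      rw [hlaw i]; exact integrable_pow_gaussianReal n
    exact h h2
  have zmom_val : ∀ (i : ι) (n : ℕ), ∫ ω, z i ω ^ n ∂μ = M n := by
    intro i n
    have h := integral_map (μ := μ) (φ := z i) (f := fun x : ℝ => x ^ n)
      (hzm i).aemeasurable
      (by rw [hlaw i]; exact (integrable_pow_gaussianReal n).aestronglyMeasurable)
    rw [hlaw i] at h
    rw [← h]; rfl
  -- independence of z k from sums not involving k
  have hsum_indep : ∀ (k : ι) (s : Finset ι), k ∉ s →
      IndepFun (z k) (fun ω => ∑ i ∈ s, Real.sqrt (C i) * z i ω) μ := by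
    intro k s hk
    classical
    set ψ : ι → ℝ → ℝ := fun i => if i = k then id else fun x => Real.sqrt (C i) * x
      with hψdef
    have hψ : ∀ i, Measurable (ψ i) := by
      intro i
      by_cases h : i = k
      · simp only [hψdef, h, if_pos rfl]; exact measurable_id
      · simp only [hψdef, if_neg h]; exact measurable_id.const_mul _
    have hfam : iIndepFun (fun i => ψ i ∘ z i) μ :=
      hindep.comp ψ hψ
    have h := hfam.indepFun_finsetSum_of_notMem
      (fun i => (hψ i).comp (hzm i)) hk
    have e1 : (∑ j ∈ s, ψ j ∘ z j) = fun ω => ∑ i ∈ s, Real.sqrt (C i) * z i ω := by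
      funext ω
      rw [Finset.sum_apply]
      refine Finset.sum_congr rfl fun j hj => ?_
      have : j ≠ k := fun hjk => hk (hjk ▸ hj)
      simp [hψdef, this]
    have e2 : ψ k ∘ z k = z k := by
      funext ω; simp [hψdef]
    rw [e1, e2] at h
    exact h.symm
  -- moments of partial sums
  have key : ∀ s : Finset ι, ∀ k : ℕ, k ≤ 4 →
      Integrable (fun ω => (∑ i ∈ s, Real.sqrt (C i) * z i ω) ^ k) μ ∧
      ∫ ω, (∑ i ∈ s, Real.sqrt (C i) * z i ω) ^ k ∂μ = mval k (∑ i ∈ s, C i) := by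
    intro s
    induction s using Finset.induction_on with
    | empty =>
      intro k hk
      simp only [Finset.sum_empty]
      interval_cases k <;>
        simp [mval, integrable_const, integral_const, measure_univ]
    | @insert a s ha IH =>
      intro k hk
      set X : Ω → ℝ := fun ω => Real.sqrt (C a) * z a ω with hXdef
      set Y : Ω → ℝ := fun ω => ∑ i ∈ s, Real.sqrt (C i) * z i ω with hYdef
      set Ss : ℝ := ∑ i ∈ s, C i with hSsdef
      have hins : ∀ ω, ∑ i ∈ insert a s, Real.sqrt (C i) * z i ω = X ω + Y ω := by
        intro ω; rw [Finset.sum_insert ha]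
      have hXY : IndepFun X Y μ := by
        have := (hsum_indep a s ha).comp
          (measurable_id.const_mul (Real.sqrt (C a))) measurable_id
        exact this
      have hpow : ∀ j m : ℕ, IndepFun (fun ω => X ω ^ j) (fun ω => Y ω ^ m) μ :=
        fun j m => hXY.comp (measurable_id.pow_const j) (measurable_id.pow_const m)
      have hXint : ∀ j : ℕ, Integrable (fun ω => X ω ^ j) μ := by
        intro j
        have := (zmom_int a j).const_mul (Real.sqrt (C a) ^ j)
        refine this.congr ?_
        filter_upwards with ω
        simp only [hXdef, mul_pow]
      have hXval : ∀ j : ℕ, ∫ ω, X ω ^ j ∂μ = Real.sqrt (C a) ^ j * M j := by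
        intro j
        simp only [hXdef, mul_pow]
        rw [integral_const_mul, zmom_val a j]
      have hterm : ∀ j m : ℕ, m ≤ 4 →
          Integrable (fun ω => X ω ^ j * Y ω ^ m) μ ∧
          ∫ ω, X ω ^ j * Y ω ^ m ∂μ = (Real.sqrt (C a) ^ j * M j) * mval m Ss := by
        intro j m hm
        have hYi := (IH m hm).1
        constructor
        · exact (hpow j m).integrable_mul (hXint j) hYi
        · have := (hpow j m).integral_mul_eq_mul_integral (hXint j).aestronglyMeasurable hYi.aestronglyMeasurable
          rw [show ((fun ω => X ω ^ j) * fun ω => Y ω ^ m)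
              = fun ω => X ω ^ j * Y ω ^ m from rfl] at this
          rw [this, hXval j, (IH m hm).2]
      have hexp : ∀ ω, (X ω + Y ω) ^ k
          = ∑ j ∈ Finset.range (k+1), X ω ^ j * Y ω ^ (k - j) * (k.choose j : ℝ) :=
        fun ω => add_pow (X ω) (Y ω) k
      have hfun : (fun ω => (∑ i ∈ insert a s, Real.sqrt (C i) * z i ω) ^ k)
          = fun ω => ∑ j ∈ Finset.range (k+1),
              X ω ^ j * Y ω ^ (k - j) * (k.choose j : ℝ) := by
        funext ω; rw [hins ω, hexp ω]
      have hintk : Integrable (fun ω => (∑ i ∈ insert a s, Real.sqrt (C i) * z i ω) ^ k) μ := by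
        rw [hfun]
        exact integrable_finset_sum _ fun j _ =>
          (hterm j (k - j) (le_trans (Nat.sub_le _ _) hk)).1.mul_const _
      refine ⟨hintk, ?_⟩
      rw [hfun, integral_finset_sum _ fun j _ =>
        (hterm j (k - j) (le_trans (Nat.sub_le _ _) hk)).1.mul_const _]
      have hv : ∀ j ∈ Finset.range (k+1),
          ∫ ω, X ω ^ j * Y ω ^ (k - j) * (k.choose j : ℝ) ∂μ
          = (Real.sqrt (C a) ^ j * M j) * mval (k - j) Ss * (k.choose j : ℝ) := by
        intro j _
        rw [integral_mul_const, (hterm j (k - j) (le_trans (Nat.sub_le _ _) hk)).2]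
      rw [Finset.sum_congr rfl hv, Finset.sum_insert ha, ← hSsdef]
      have hsq : Real.sqrt (C a) ^ 2 = C a := Real.sq_sqrt (hC a)
      have hsq4 : Real.sqrt (C a) ^ 4 = C a ^ 2 := by
        rw [show (4:ℕ) = 2 * 2 from rfl, pow_mul, hsq]
      interval_cases k <;>
        simp [Finset.sum_range_succ, M_zero, M_one, M_two, M_three, M_four,
          mval, hsq, hsq4, Nat.choose] <;> ring
  -- notation
  set S : ℝ := ∑ i, C i with hSdef
  -- basic single-variable facts
  have hz1 : ∀ i, Integrable (z i) μ := by
    intro i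
    have := zmom_int i 1
    simpa using this
  have hz1v : ∀ i, ∫ ω, z i ω ∂μ = 0 := by
    intro i
    have := zmom_val i 1
    simpa [M_one] using this
  -- E[z i z j] = δ i j
  have hzz : ∀ i j : ι, Integrable (fun ω => z i ω * z j ω) μ ∧
      ∫ ω, z i ω * z j ω ∂μ = (if i = j then (1:ℝ) else 0) := by
    intro i j
    by_cases hij : i = j
    · subst hij
      have h1 : (fun ω => z i ω * z i ω) = fun ω => z i ω ^ 2 := by
        funext ω; ring
      rw [h1, if_pos rfl]
      exact ⟨zmom_int i 2, by rw [zmom_val i 2, M_two]⟩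
    · have hind := hindep.indepFun hij
      have hint := hind.integrable_mul (hz1 i) (hz1 j)
      have hval := hind.integral_mul_eq_mul_integral (hz1 i).aestronglyMeasurable (hz1 j).aestronglyMeasurable
      rw [if_neg hij]
      exact ⟨hint, by
        rw [show ((z i) * (z j)) = fun ω => z i ω * z j ω from rfl] at hval
        rw [hval, hz1v i, hz1v j, mul_zero]⟩
  -- cross terms: E[z k (W² - S)] = 0
  have hcross : ∀ k : ι, Integrable (fun ω => z k ω * ((W ω) ^ 2 - S)) μ ∧
      ∫ ω, z k ω * ((W ω) ^ 2 - S) ∂μ = 0 := by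
    intro k
    set Yk : Ω → ℝ := fun ω => ∑ i ∈ Finset.univ.erase k, Real.sqrt (C i) * z i ω
      with hYkdef
    set Sk : ℝ := ∑ i ∈ Finset.univ.erase k, C i with hSkdef
    have hWk : ∀ ω, W ω = Real.sqrt (C k) * z k ω + Yk ω := by
      intro ω
      rw [hW ω]
      exact (Finset.add_sum_erase _ _ (Finset.mem_univ k)).symm
    have hindY := hsum_indep k (Finset.univ.erase k) (Finset.notMem_erase k _)
    have hjm : ∀ j m : ℕ, IndepFun (fun ω => z k ω ^ j) (fun ω => Yk ω ^ m) μ :=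
      fun j m => hindY.comp (measurable_id.pow_const j) (measurable_id.pow_const m)
    have hterm2 : ∀ j m : ℕ, m ≤ 4 →
        Integrable (fun ω => z k ω ^ j * Yk ω ^ m) μ ∧
        ∫ ω, z k ω ^ j * Yk ω ^ m ∂μ = M j * mval m Sk := by
      intro j m hm
      have hYi := (key (Finset.univ.erase k) m hm).1
      have hYv := (key (Finset.univ.erase k) m hm).2
      refine ⟨(hjm j m).integrable_mul (zmom_int k j) hYi, ?_⟩
      have := (hjm j m).integral_mul_eq_mul_integral (zmom_int k j).aestronglyMeasurable hYi.aestronglyMeasurable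
      rw [show ((fun ω => z k ω ^ j) * fun ω => Yk ω ^ m)
          = fun ω => z k ω ^ j * Yk ω ^ m from rfl] at this
      rw [this, zmom_val k j, hYv]
    have hdec : (fun ω => z k ω * ((W ω) ^ 2 - S))
        = fun ω => Real.sqrt (C k) ^ 2 * (z k ω ^ 3 * Yk ω ^ 0)
          + (2 * Real.sqrt (C k)) * (z k ω ^ 2 * Yk ω ^ 1)
          + (z k ω ^ 1 * Yk ω ^ 2)
          + (-S) * (z k ω ^ 1 * Yk ω ^ 0) := by
      funext ω
      rw [hWk ω]
      ring
    have i1 := hterm2 3 0 (by norm_num)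
    have i2 := hterm2 2 1 (by norm_num)
    have i3 := hterm2 1 2 (by norm_num)
    have i4 := hterm2 1 0 (by norm_num)
    have hint : Integrable (fun ω => z k ω * ((W ω) ^ 2 - S)) μ := by
      rw [hdec]
      exact (((i1.1.const_mul _).add (i2.1.const_mul _)).add i3.1).add
        (i4.1.const_mul _)
    refine ⟨hint, ?_⟩
    have e0a : Integrable (fun ω => Real.sqrt (C k) ^ 2 * (z k ω ^ 3 * Yk ω ^ 0)) μ :=
      i1.1.const_mul _
    have e0b : Integrable (fun ω => (2 * Real.sqrt (C k)) * (z k ω ^ 2 * Yk ω ^ 1)) μ :=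
      i2.1.const_mul _
    have e1 : Integrable (fun ω => Real.sqrt (C k) ^ 2 * (z k ω ^ 3 * Yk ω ^ 0)
        + (2 * Real.sqrt (C k)) * (z k ω ^ 2 * Yk ω ^ 1)) μ := e0a.add e0b
    have e2 : Integrable (fun ω => Real.sqrt (C k) ^ 2 * (z k ω ^ 3 * Yk ω ^ 0)
        + (2 * Real.sqrt (C k)) * (z k ω ^ 2 * Yk ω ^ 1)
        + (z k ω ^ 1 * Yk ω ^ 2)) μ := e1.add i3.1
    rw [hdec]
    rw [integral_add e2 (i4.1.const_mul _), integral_add e1 i3.1,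
      integral_add e0a e0b,
      integral_const_mul, integral_const_mul, integral_const_mul,
      i1.2, i2.2, i3.2, i4.2]
    simp [M_one, M_three, mval]
  -- E[(W²-S)²] = 2 S²
  have hQsq : Integrable (fun ω => ((W ω) ^ 2 - S) ^ 2) μ ∧
      ∫ ω, ((W ω) ^ 2 - S) ^ 2 ∂μ = 2 * S ^ 2 := by
    have hWu : (fun ω => W ω) = fun ω => ∑ i, Real.sqrt (C i) * z i ω := by
      funext ω; exact hW ω
    have k4 := key Finset.univ 4 (by norm_num)
    have k2 := key Finset.univ 2 (by norm_num)
    have hW4 : Integrable (fun ω => (W ω) ^ 4) μ := by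
      refine k4.1.congr ?_
      filter_upwards with ω
      rw [hW ω]
    have hW2 : Integrable (fun ω => (W ω) ^ 2) μ := by
      refine k2.1.congr ?_
      filter_upwards with ω
      rw [hW ω]
    have hW4v : ∫ ω, (W ω) ^ 4 ∂μ = 3 * S ^ 2 := by
      have : (fun ω => (W ω) ^ 4) = fun ω => (∑ i, Real.sqrt (C i) * z i ω) ^ 4 := by
        funext ω; rw [hW ω]
      rw [this, k4.2]
      rfl
    have hW2v : ∫ ω, (W ω) ^ 2 ∂μ = S := by
      have : (fun ω => (W ω) ^ 2) = fun ω => (∑ i, Real.sqrt (C i) * z i ω) ^ 2 := by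
        funext ω; rw [hW ω]
      rw [this, k2.2]
      rfl
    have hdec : (fun ω => ((W ω) ^ 2 - S) ^ 2)
        = fun ω => (W ω) ^ 4 + (-(2 * S)) * (W ω) ^ 2 + S ^ 2 := by
      funext ω; ring
    have hint : Integrable (fun ω => ((W ω) ^ 2 - S) ^ 2) μ := by
      rw [hdec]
      exact (hW4.add (hW2.const_mul _)).add (integrable_const _)
    refine ⟨hint, ?_⟩
    have eA : Integrable (fun ω => (W ω) ^ 4 + (-(2 * S)) * (W ω) ^ 2) μ :=
      hW4.add (hW2.const_mul _)
    rw [hdec, integral_add eA (integrable_const _),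
      integral_add hW4 (hW2.const_mul _), integral_const_mul, hW4v, hW2v,
      integral_const, probReal_univ]
    simp
    ring
  -- final decomposition
  set a : ℝ := Real.sqrt (4 * Real.pi * C ℓ) with hadef
  set b : ℝ := Real.sqrt (4 * Real.pi * C ℓ') with hbdef
  have hdecomp : (fun ω => η ℓ ω * η ℓ' ω)
      = fun ω => (a * b) * (z ℓ ω * z ℓ' ω)
        + (3 * f * a) * (z ℓ ω * ((W ω) ^ 2 - S))
        + (3 * f * b) * (z ℓ' ω * ((W ω) ^ 2 - S))
        + (9 * f ^ 2) * (((W ω) ^ 2 - S) ^ 2) := by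
    funext ω
    rw [hη ℓ ω, hη ℓ' ω, hQ ω, ← hadef, ← hbdef]
    ring
  have hI1 := (hzz ℓ ℓ').1
  have hI2 := (hcross ℓ).1
  have hI3 := (hcross ℓ').1
  have hI4 := hQsq.1
  have eFa : Integrable (fun ω => (a * b) * (z ℓ ω * z ℓ' ω)) μ := hI1.const_mul _
  have eFb : Integrable (fun ω => (3 * f * a) * (z ℓ ω * ((W ω) ^ 2 - S))) μ :=
    hI2.const_mul _
  have eFc : Integrable (fun ω => (3 * f * b) * (z ℓ' ω * ((W ω) ^ 2 - S))) μ :=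
    hI3.const_mul _
  have eF1 : Integrable (fun ω => (a * b) * (z ℓ ω * z ℓ' ω)
      + (3 * f * a) * (z ℓ ω * ((W ω) ^ 2 - S))) μ := eFa.add eFb
  have eF2 : Integrable (fun ω => (a * b) * (z ℓ ω * z ℓ' ω)
      + (3 * f * a) * (z ℓ ω * ((W ω) ^ 2 - S))
      + (3 * f * b) * (z ℓ' ω * ((W ω) ^ 2 - S))) μ := eF1.add eFc
  rw [hdecomp,
    integral_add eF2 (hI4.const_mul _),
    integral_add eF1 eFc,
    integral_add eFa eFb,
    integral_const_mul, integral_const_mul, integral_const_mul, integral_const_mul,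
    (hzz ℓ ℓ').2, (hcross ℓ).2, (hcross ℓ').2, hQsq.2]
  by_cases hll : ℓ = ℓ'
  · subst hll
    simp only [if_pos rfl]
    have hnn : (0:ℝ) ≤ 4 * Real.pi * C ℓ :=
      mul_nonneg (by positivity) (hC ℓ)
    have hab : a * b = 4 * Real.pi * C ℓ := by
      rw [hadef, hbdef]
      exact Real.mul_self_sqrt hnn
    rw [hab]
    ring
  · simp only [if_neg hll]
    ring
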